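/- arXiv:2409.10859 — 3 statements merged into one kernel-verified Lean document; each statement's English description precedes it below -/
import Mathlib

section
/- The Shannon entropy of a normalized power-law distribution is increasing in the number of atoms: fix α > 0 and for K ≥ 1 define p_k^{(K)} = k^{−α} / Z_{K,α} for 1 ≤ k ≤ K, where Z_{K,α} = ∑_{k=1}^K k^{−α}. Then the Shannon entropy H(p^{(K)}) = −∑_{k=1}^K p_k^{(K)} log p_k^{(K)} is strictly increasing in K. -/
open Finset

private lemma plaw_Z_pos (α : ℝ) {K : ℕ} (hK : 1 ≤ K) :
    0 < ∑ j ∈ Finset.Icc 1 K, (j : ℝ) ^ (-α) := by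
  apply Finset.sum_pos
  · intro j hj
    have hj1 : 1 ≤ j := (Finset.mem_Icc.mp hj).1
    have : (0:ℝ) < j := by exact_mod_cast Nat.lt_of_lt_of_le Nat.zero_lt_one hj1
    exact Real.rpow_pos_of_pos this _
  · exact ⟨1, Finset.mem_Icc.mpr ⟨le_refl 1, hK⟩⟩

private lemma plaw_entropy_eq (α : ℝ) {K : ℕ} (hK : 1 ≤ K) :
    -∑ k ∈ Finset.Icc 1 K,
        ((k : ℝ) ^ (-α) / ∑ j ∈ Finset.Icc 1 K, (j : ℝ) ^ (-α)) *
          Real.log ((k : ℝ) ^ (-α) / ∑ j ∈ Finset.Icc 1 K, (j : ℝ) ^ (-α)) =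
      Real.log (∑ j ∈ Finset.Icc 1 K, (j : ℝ) ^ (-α)) +
        α * (∑ k ∈ Finset.Icc 1 K, (k : ℝ) ^ (-α) * Real.log k) /
          (∑ j ∈ Finset.Icc 1 K, (j : ℝ) ^ (-α)) := by
  set Z := ∑ j ∈ Finset.Icc 1 K, (j : ℝ) ^ (-α) with hZ
  have hZpos : 0 < Z := plaw_Z_pos α hK
  have h1 : ∀ k ∈ Finset.Icc 1 K,
      ((k : ℝ) ^ (-α) / Z) * Real.log ((k : ℝ) ^ (-α) / Z) =
        (-(α / Z)) * ((k:ℝ)^(-α) * Real.log k) - ((k:ℝ)^(-α)/Z) * Real.log Z := by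
    intro k hk
    have hk1 : 1 ≤ k := (Finset.mem_Icc.mp hk).1
    have hk0 : (0:ℝ) < k := by exact_mod_cast Nat.lt_of_lt_of_le Nat.zero_lt_one hk1
    rw [Real.log_div (ne_of_gt (Real.rpow_pos_of_pos hk0 _)) (ne_of_gt hZpos),
        Real.log_rpow hk0]
    ring
  rw [Finset.sum_congr rfl h1, Finset.sum_sub_distrib, ← Finset.mul_sum]
  have h2 : ∑ k ∈ Finset.Icc 1 K, ((k:ℝ)^(-α)/Z) * Real.log Z = Real.log Z := by
    rw [← Finset.sum_mul, ← Finset.sum_div, div_self (ne_of_gt hZpos), one_mul]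
  rw [h2]
  ring

private lemma plaw_step (α : ℝ) (hα : 0 < α) {K : ℕ} (hK : 1 ≤ K) :
    Real.log (∑ j ∈ Finset.Icc 1 K, (j : ℝ) ^ (-α)) +
        α * (∑ k ∈ Finset.Icc 1 K, (k : ℝ) ^ (-α) * Real.log k) /
          (∑ j ∈ Finset.Icc 1 K, (j : ℝ) ^ (-α)) <
      Real.log (∑ j ∈ Finset.Icc 1 (K+1), (j : ℝ) ^ (-α)) +
        α * (∑ k ∈ Finset.Icc 1 (K+1), (k : ℝ) ^ (-α) * Real.log k) /
          (∑ j ∈ Finset.Icc 1 (K+1), (j : ℝ) ^ (-α)) := by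
  set Z := ∑ j ∈ Finset.Icc 1 K, (j : ℝ) ^ (-α) with hZ
  set S := ∑ k ∈ Finset.Icc 1 K, (k : ℝ) ^ (-α) * Real.log k with hS
  have hZpos : 0 < Z := plaw_Z_pos α hK
  have hw : (0:ℝ) < ((K+1 : ℕ) : ℝ) ^ (-α) := by
    apply Real.rpow_pos_of_pos
    exact_mod_cast Nat.succ_pos K
  have hZsucc : ∑ j ∈ Finset.Icc 1 (K+1), (j : ℝ) ^ (-α) = Z + ((K+1:ℕ):ℝ)^(-α) := by
    rw [Finset.sum_Icc_succ_top (by omega : 1 ≤ K+1)]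
  have hSsucc : ∑ k ∈ Finset.Icc 1 (K+1), (k : ℝ) ^ (-α) * Real.log k
      = S + ((K+1:ℕ):ℝ)^(-α) * Real.log ((K+1:ℕ):ℝ) := by
    rw [Finset.sum_Icc_succ_top (by omega : 1 ≤ K+1)]
  rw [hZsucc, hSsucc]
  set w := ((K+1:ℕ):ℝ)^(-α) with hwdef
  set L := Real.log ((K+1:ℕ):ℝ) with hL
  have hZ'pos : 0 < Z + w := by linarith
  -- S ≤ L * Z since log k ≤ L for k ≤ K+1
  have hSLZ : S ≤ L * Z := by
    rw [hS, hZ, Finset.mul_sum]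
    apply Finset.sum_le_sum
    intro k hk
    have hk1 : 1 ≤ k := (Finset.mem_Icc.mp hk).1
    have hkK : k ≤ K := (Finset.mem_Icc.mp hk).2
    have hk0 : (0:ℝ) < k := by exact_mod_cast Nat.lt_of_lt_of_le Nat.zero_lt_one hk1
    have hlog : Real.log k ≤ L := by
      rw [hL]
      apply Real.log_le_log hk0
      exact_mod_cast (by omega : k ≤ K + 1)
    have hwk : (0:ℝ) ≤ (k:ℝ)^(-α) := le_of_lt (Real.rpow_pos_of_pos hk0 _)
    nlinarith
  have hlt : Real.log Z < Real.log (Z + w) := Real.log_lt_log hZpos (by linarith)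
  have hdiv : α * S / Z ≤ α * (S + w * L) / (Z + w) := by
    rw [div_le_div_iff₀ hZpos hZ'pos]
    have hSnn : 0 ≤ S := by
      rw [hS]
      apply Finset.sum_nonneg
      intro k hk
      have hk1 : 1 ≤ k := (Finset.mem_Icc.mp hk).1
      have hk0 : (0:ℝ) < k := by exact_mod_cast Nat.lt_of_lt_of_le Nat.zero_lt_one hk1
      have : (0:ℝ) ≤ Real.log k := Real.log_nonneg (by exact_mod_cast hk1)
      exact mul_nonneg (le_of_lt (Real.rpow_pos_of_pos hk0 _)) this
    nlinarith [mul_nonneg (mul_nonneg hα.le hw.le) (sub_nonneg.mpr hSLZ)]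
  linarith

/-- The Shannon entropy of a normalized power law with exponent `α > 0` on
`{1, ..., K}` is strictly increasing in the number of atoms `K ≥ 1`. -/
theorem entropy_powerlaw_strictMono (α : ℝ) (hα : 0 < α) :
    StrictMonoOn
      (fun K : ℕ =>
        -∑ k ∈ Finset.Icc 1 K,
          ((k : ℝ) ^ (-α) / ∑ j ∈ Finset.Icc 1 K, (j : ℝ) ^ (-α)) *
            Real.log ((k : ℝ) ^ (-α) / ∑ j ∈ Finset.Icc 1 K, (j : ℝ) ^ (-α)))
      {K : ℕ | 1 ≤ K} := by
  have key : ∀ K : ℕ, 1 ≤ K →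
      (fun K : ℕ =>
        -∑ k ∈ Finset.Icc 1 K,
          ((k : ℝ) ^ (-α) / ∑ j ∈ Finset.Icc 1 K, (j : ℝ) ^ (-α)) *
            Real.log ((k : ℝ) ^ (-α) / ∑ j ∈ Finset.Icc 1 K, (j : ℝ) ^ (-α))) K <
      (fun K : ℕ =>
        -∑ k ∈ Finset.Icc 1 K,
          ((k : ℝ) ^ (-α) / ∑ j ∈ Finset.Icc 1 K, (j : ℝ) ^ (-α)) *
            Real.log ((k : ℝ) ^ (-α) / ∑ j ∈ Finset.Icc 1 K, (j : ℝ) ^ (-α))) (K+1) := by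
    intro K hK
    simp only
    rw [plaw_entropy_eq α hK, plaw_entropy_eq α (by omega : 1 ≤ K+1)]
    exact plaw_step α hα hK
  intro a ha b hb hab
  have ha' : 1 ≤ a := ha
  induction b, hab using Nat.le_induction with
  | base => exact key a ha'
  | succ n hn ih =>
      have hn1 : 1 ≤ n := by omega
      exact lt_trans (ih hn1) (key n hn1)
end

section
/- Second-order Taylor bound for the excess growth rate: for any probability vector w on {1,...,n} and log-returns r with |r_i| ≤ ε for all i, the excess growth rate γ_w(r) = log(∑_i w_i e^{r_i}) − ∑_i w_i r_i satisfies γ_w(r) ≤ (1/2)(∑_i w_i r_i^2) e^{ε}. -/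
open Real Finset

private lemma exp_taylor_key (ε x : ℝ) (hx : |x| ≤ ε) :
    Real.exp x - 1 - x ≤ Real.exp ε / 2 * x ^ 2 := by
  have hε : 0 ≤ ε := le_trans (abs_nonneg x) hx
  set f : ℝ → ℝ := fun y => Real.exp ε / 2 * y ^ 2 + 1 + y - Real.exp y with hf
  have hderiv : ∀ y : ℝ, HasDerivAt f (Real.exp ε * y + 1 - Real.exp y) y := by
    intro y
    have h1 : HasDerivAt (fun y : ℝ => Real.exp ε / 2 * y ^ 2 + 1 + y - Real.exp y)
        (Real.exp ε / 2 * (2 * y ^ 1) + 1 - Real.exp y) y := by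
      exact ((((hasDerivAt_pow 2 y).const_mul (Real.exp ε / 2)).add_const 1).add
        (hasDerivAt_id y)).sub (Real.hasDerivAt_exp y)
    convert h1 using 1
    ring
  have hdiff : Differentiable ℝ f := fun y => (hderiv y).differentiableAt
  have hf0 : f 0 = 0 := by simp [hf]
  have hfx : 0 ≤ f x := by
    rcases le_or_gt 0 x with hx0 | hx0
    · -- monotone on [0, ε]
      have hmono : MonotoneOn f (Set.Icc 0 ε) := by
        apply monotoneOn_of_deriv_nonneg (convex_Icc 0 ε) hdiff.continuous.continuousOn
          (hdiff.differentiableOn)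
        intro y hy
        rw [interior_Icc] at hy
        rw [(hderiv y).deriv]
        have hy0 : 0 ≤ y := le_of_lt hy.1
        have h1 : Real.exp y - 1 ≤ y * Real.exp y := by
          have h := Real.add_one_le_exp (-y)
          have hpos := Real.exp_pos y
          have hmul : Real.exp (-y) * Real.exp y = 1 := by
            rw [← Real.exp_add]; simp
          nlinarith [mul_le_mul_of_nonneg_right h hpos.le]
        have h2 : y * Real.exp y ≤ y * Real.exp ε := by
          apply mul_le_mul_of_nonneg_left (Real.exp_le_exp.2 hy.2.le) hy0
        nlinarith
      have := hmono (Set.mem_Icc.2 ⟨le_refl 0, hε⟩)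
        (Set.mem_Icc.2 ⟨hx0, (abs_le.1 hx).2⟩) hx0
      linarith [hf0 ▸ this]
    · -- antitone on [-ε, 0]
      have hanti : AntitoneOn f (Set.Icc (-ε) 0) := by
        apply antitoneOn_of_deriv_nonpos (convex_Icc (-ε) 0) hdiff.continuous.continuousOn
          (hdiff.differentiableOn)
        intro y hy
        rw [interior_Icc] at hy
        rw [(hderiv y).deriv]
        have hy0 : y ≤ 0 := le_of_lt hy.2
        have h1 : 1 + y ≤ Real.exp y := by linarith [Real.add_one_le_exp y]
        have h2 : Real.exp ε * y ≤ 1 * y := by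
          apply mul_le_mul_of_nonpos_right _ hy0
          simpa using Real.one_le_exp hε
        nlinarith
      have := hanti (Set.mem_Icc.2 ⟨(abs_le.1 hx).1, hx0.le⟩)
        (Set.mem_Icc.2 ⟨neg_nonpos.2 hε, le_refl 0⟩) hx0.le
      linarith [hf0 ▸ this]
  simp only [hf] at hfx
  linarith

/-- Second-order Taylor bound for the excess growth rate: when all log-returns
are bounded by `ε` in absolute value, `γ_w(r) ≤ (e^ε / 2) ∑ᵢ wᵢ rᵢ²`. -/
theorem excess_growth_rate_taylor_bound (n : ℕ) (w r : Fin n → ℝ) (ε : ℝ)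
    (hw : ∀ i, 0 ≤ w i) (hsum : ∑ i, w i = 1) (hr : ∀ i, |r i| ≤ ε) :
    Real.log (∑ i, w i * Real.exp (r i)) - ∑ i, w i * r i ≤
      (Real.exp ε / 2) * ∑ i, w i * (r i) ^ 2 := by
  have hSpos : 0 < ∑ i, w i * Real.exp (r i) := by
    have hne : ∃ i ∈ Finset.univ, 0 < w i := by
      by_contra h
      push_neg at h
      have : ∑ i, w i ≤ 0 := Finset.sum_nonpos fun i _ => h i (Finset.mem_univ i)
      linarith
    obtain ⟨i, _, hi⟩ := hne
    exact Finset.sum_pos' (fun j _ => mul_nonneg (hw j) (Real.exp_pos _).le)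
      ⟨i, Finset.mem_univ i, mul_pos hi (Real.exp_pos _)⟩
  have hlog : Real.log (∑ i, w i * Real.exp (r i)) ≤ (∑ i, w i * Real.exp (r i)) - 1 :=
    Real.log_le_sub_one_of_pos hSpos
  have hsum2 : (∑ i, w i * Real.exp (r i)) - 1 - ∑ i, w i * r i
      = ∑ i, w i * (Real.exp (r i) - 1 - r i) := by
    simp only [mul_sub, mul_one, Finset.sum_sub_distrib, hsum]
  have hbound : ∑ i, w i * (Real.exp (r i) - 1 - r i)
      ≤ ∑ i, w i * (Real.exp ε / 2 * (r i) ^ 2) := by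
    apply Finset.sum_le_sum
    intro i _
    exact mul_le_mul_of_nonneg_left (exp_taylor_key ε (r i) (hr i)) (hw i)
  have hfin : ∑ i, w i * (Real.exp ε / 2 * (r i) ^ 2)
      = (Real.exp ε / 2) * ∑ i, w i * (r i) ^ 2 := by
    rw [Finset.mul_sum]
    exact Finset.sum_congr rfl fun i _ => by ring
  linarith
end

section
/- Entropy of the diversity-weighted portfolio exceeds that of the market: for p ∈ (0,1) and μ in the open unit simplex with μ not uniform, the probability vector π with π_i = μ_i^p/∑_j μ_j^p satisfies H(π) > H(μ), where H denotes Shannon entropy. -/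
open Real Finset

/-- Gibbs' inequality (non-strict form). -/
lemma gibbs_le {n : ℕ} (a b : Fin n → ℝ) (ha : ∀ i, 0 < a i) (hb : ∀ i, 0 < b i)
    (hsa : ∑ i, a i = 1) (hsb : ∑ i, b i = 1) :
    ∑ i, a i * Real.log (b i / a i) ≤ 0 := by
  have h1 : ∑ i, a i * Real.log (b i / a i) ≤ ∑ i, a i * (b i / a i - 1) := by
    apply Finset.sum_le_sum
    intro i _
    exact mul_le_mul_of_nonneg_left
      (Real.log_le_sub_one_of_pos (div_pos (hb i) (ha i))) (ha i).le
  have h2 : ∑ i, a i * (b i / a i - 1) = 0 := by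
    rw [Finset.sum_congr rfl (fun i _ => show a i * (b i / a i - 1) = b i - a i by
      rw [mul_sub, mul_one, ← mul_div_assoc, mul_div_cancel_left₀ _ (ha i).ne'])]
    rw [Finset.sum_sub_distrib, hsa, hsb, sub_self]
  linarith

/-- Gibbs' inequality (strict form). -/
lemma gibbs_lt {n : ℕ} (a b : Fin n → ℝ) (ha : ∀ i, 0 < a i) (hb : ∀ i, 0 < b i)
    (hsa : ∑ i, a i = 1) (hsb : ∑ i, b i = 1) (i0 : Fin n) (hne : a i0 ≠ b i0) :
    ∑ i, a i * Real.log (b i / a i) < 0 := by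
  have h1 : ∑ i, a i * Real.log (b i / a i) < ∑ i, a i * (b i / a i - 1) := by
    apply Finset.sum_lt_sum
    · intro i _
      exact mul_le_mul_of_nonneg_left
        (Real.log_le_sub_one_of_pos (div_pos (hb i) (ha i))) (ha i).le
    · refine ⟨i0, Finset.mem_univ _, ?_⟩
      have hx : b i0 / a i0 ≠ 1 := by
        intro h
        exact hne ((div_eq_one_iff_eq (ha i0).ne').mp h).symm
      exact mul_lt_mul_of_pos_left
        (Real.log_lt_sub_one_of_pos (div_pos (hb i0) (ha i0)) hx) (ha i0)
  have h2 : ∑ i, a i * (b i / a i - 1) = 0 := by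
    rw [Finset.sum_congr rfl (fun i _ => show a i * (b i / a i - 1) = b i - a i by
      rw [mul_sub, mul_one, ← mul_div_assoc, mul_div_cancel_left₀ _ (ha i).ne'])]
    rw [Finset.sum_sub_distrib, hsa, hsb, sub_self]
  linarith

/-- The diversity-weighted portfolio has strictly greater Shannon entropy than
the market weights, when `p ∈ (0,1)` and `μ` is not uniform. -/
theorem entropy_diversity_weighted_gt (n : ℕ) (p : ℝ)
    (hp : p ∈ Set.Ioo (0 : ℝ) 1) (μ : Fin n → ℝ)
    (hμ : ∀ i, 0 < μ i) (hsum : ∑ i, μ i = 1)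
    (hnonunif : ¬ ∀ i, μ i = 1 / n) :
    -∑ i, μ i * Real.log (μ i) <
      -∑ i, (μ i ^ p / ∑ j, μ j ^ p) *
        Real.log (μ i ^ p / ∑ j, μ j ^ p) := by
  obtain ⟨hp0, hp1⟩ := hp
  set S : ℝ := ∑ j, μ j ^ p with hS_def
  have hn : 0 < n := by
    rcases Nat.eq_zero_or_pos n with h | h
    · exfalso; apply hnonunif; intro i; exact absurd i.2 (by omega)
    · exact h
  have hS : 0 < S := by
    apply Finset.sum_pos
    · intro j _; exact Real.rpow_pos_of_pos (hμ j) p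
    · exact ⟨⟨0, hn⟩, Finset.mem_univ _⟩
  set v : Fin n → ℝ := fun i => μ i ^ p / S with hv_def
  have hvpos : ∀ i, 0 < v i := fun i => div_pos (Real.rpow_pos_of_pos (hμ i) p) hS
  have hvsum : ∑ i, v i = 1 := by
    rw [hv_def, ← Finset.sum_div]
    exact div_self hS.ne'
  have hne : ∃ i, μ i ≠ v i := by
    by_contra h
    push_neg at h
    apply hnonunif
    have hconst : ∀ i, μ i ^ (1 - p) = 1 / S := by
      intro i
      have h1 : μ i * S = μ i ^ p := by
        have := h i
        rw [hv_def] at this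
        field_simp at this ⊢
        linarith [this]
      have h2 : μ i ^ (1 - p) * μ i ^ p = μ i := by
        rw [← Real.rpow_add (hμ i)]; simp
      rw [← h1] at h2
      field_simp at h2 ⊢
      nlinarith [Real.rpow_pos_of_pos (hμ i) p, hμ i, hS]
    have hconst2 : ∀ i j, μ i = μ j := by
      intro i j
      have heq : μ i ^ (1 - p) = μ j ^ (1 - p) := by rw [hconst i, hconst j]
      have h1p : (1 : ℝ) - p ≠ 0 := by linarith
      calc μ i = (μ i ^ (1 - p)) ^ (1 - p)⁻¹ := by
              rw [← Real.rpow_mul (hμ i).le, mul_inv_cancel₀ h1p, Real.rpow_one]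
        _ = (μ j ^ (1 - p)) ^ (1 - p)⁻¹ := by rw [heq]
        _ = μ j := by
              rw [← Real.rpow_mul (hμ j).le, mul_inv_cancel₀ h1p, Real.rpow_one]
    intro i
    have hsum' : ∑ j, μ j = n * μ i := by
      rw [Finset.sum_congr rfl (fun j _ => hconst2 j i)]
      simp [mul_comm]
    rw [hsum] at hsum'
    have hn' : (0:ℝ) < n := Nat.cast_pos.mpr hn
    field_simp
    linarith
  obtain ⟨i0, hi0⟩ := hne
  have hlogv : ∀ i, Real.log (v i) = p * Real.log (μ i) - Real.log S := by
    intro i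
    rw [hv_def]
    rw [Real.log_div (Real.rpow_pos_of_pos (hμ i) p).ne' hS.ne',
      Real.log_rpow (hμ i)]
  set A : ℝ := ∑ i, μ i * Real.log (μ i) with hA
  set B : ℝ := ∑ i, v i * Real.log (v i) with hB
  set C : ℝ := ∑ i, v i * Real.log (μ i) with hC
  have g1 : ∑ i, μ i * Real.log (v i / μ i) < 0 :=
    gibbs_lt μ v hμ hvpos hsum hvsum i0 hi0
  have g2 : ∑ i, v i * Real.log (μ i / v i) ≤ 0 :=
    gibbs_le v μ hvpos hμ hvsum hsum
  have e1 : ∑ i, μ i * Real.log (v i / μ i) = (p * A - Real.log S) - A := by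
    rw [Finset.sum_congr rfl (fun i _ => show μ i * Real.log (v i / μ i)
        = p * (μ i * Real.log (μ i)) - μ i * Real.log S - μ i * Real.log (μ i) by
      rw [Real.log_div (hvpos i).ne' (hμ i).ne', hlogv i]; ring)]
    rw [Finset.sum_sub_distrib, Finset.sum_sub_distrib, ← Finset.mul_sum,
      ← Finset.sum_mul, hsum, ← hA]
    ring
  have e2 : ∑ i, v i * Real.log (μ i / v i) = C - (p * C - Real.log S) := by
    rw [Finset.sum_congr rfl (fun i _ => show v i * Real.log (μ i / v i)
        = v i * Real.log (μ i) - (p * (v i * Real.log (μ i)) - v i * Real.log S) by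
      rw [Real.log_div (hμ i).ne' (hvpos i).ne', hlogv i]; ring)]
    rw [Finset.sum_sub_distrib, Finset.sum_sub_distrib, ← Finset.mul_sum,
      ← Finset.sum_mul, hvsum, ← hC]
    ring
  have eB : B = p * C - Real.log S := by
    rw [hB, hC]
    rw [Finset.sum_congr rfl (fun i _ => show v i * Real.log (v i)
        = p * (v i * Real.log (μ i)) - v i * Real.log S by
      rw [hlogv i]; ring)]
    rw [Finset.sum_sub_distrib, ← Finset.mul_sum, ← Finset.sum_mul, hvsum]
    ring
  rw [e1] at g1
  rw [e2] at g2
  nlinarith [g1, g2, eB, hp1]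
end
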